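/- arXiv:2105.12204 — 4 statements merged into one kernel-verified Lean document; each statement's English description precedes it below -/
import Mathlib

section
/- There exists a single controller that is simultaneously safe for every viable state: there is a controller b : X → U such that for every x ∈ X_V and every t ∈ ℕ, φ_x^b(t) ∈ X_V (in particular, b is safe for every x ∈ X_V). -/
/-! Choosing at each viable state the first action of some safe controller keeps the state
viable, because the tail of a safe trajectory is again safe. So the viability kernel is forward
invariant under this selection, and the selection is the required controller. -/

open Set

noncomputable section

def traj {X U : Type*} (f : X → U → X) (u : X → U) (x : X) : ℕ → X
  | 0 => x
  | t + 1 => f (traj f u x t) (u (traj f u x t))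

def SafeFor {X U : Type*} (f : X → U → X) (XF : Set X) (u : X → U) (x : X) : Prop :=
  ∀ t : ℕ, traj f u x t ∉ XF

def viab {X U : Type*} (f : X → U → X) (XF : Set X) : Set X :=
  {x | ∃ u : X → U, SafeFor f XF u x}

section Viability

variable {X U : Type*} {f : X → U → X} {XF : Set X}

theorem traj_succ' (u : X → U) (x : X) (t : ℕ) :
    traj f u (f x (u x)) t = traj f u x (t + 1) := by
  induction t with
  | zero => rfl
  | succ n ih => simp only [traj, ih]

theorem SafeFor.step {u : X → U} {x : X} (h : SafeFor f XF u x) :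
    SafeFor f XF u (f x (u x)) := fun t => by
  rw [traj_succ']
  exact h (t + 1)

theorem traj_mem_of_mapsTo {b : X → U} {S : Set X} (hS : MapsTo (fun x => f x (b x)) S S)
    {x : X} (hx : x ∈ S) (t : ℕ) : traj f b x t ∈ S := by
  induction t with
  | zero => exact hx
  | succ n ih => exact hS ih

open Classical in
variable (f XF) in
def viabController [Nonempty U] (x : X) : U :=
  if h : x ∈ viab f XF then h.choose x else Classical.arbitrary U

theorem step_viabController_mem_viab [Nonempty U] {x : X} (hx : x ∈ viab f XF) :
    f x (viabController f XF x) ∈ viab f XF := by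
  rw [viabController, dif_pos hx]
  exact ⟨hx.choose, hx.choose_spec.step⟩

end Viability

/-- there is a single controller that keeps every viable state in
the viability kernel forever (in particular it is safe for every viable state). -/
theorem exists_safe_controller {X U : Type*} [Nonempty U]
    (f : X → U → X) (XF : Set X) :
    ∃ b : X → U, ∀ x ∈ viab f XF, ∀ t : ℕ, traj f b x t ∈ viab f XF :=
  ⟨viabController f XF, fun _ hx => traj_mem_of_mapsTo (fun _ => step_viabController_mem_viab) hx⟩
end
end

section
/- (Proposition 1.) Let p ≥ 0. Suppose that for every x ∈ X_V the supremum defining V_p(x) is attained by some controller, and that every controller u attaining it (i.e., G(x,u) − p·ρ(x,u) = V_p(x)) is safe for x. Then V_p(x) = V(x) for all x ∈ X_V. -/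
open Set

noncomputable section

/-- Discounted return `G(x,u)`. -/
def ret {X U : Type*} (γ : ℝ) (f : X → U → X) (r : X → U → ℝ) (x : X) (u : X → U) : ℝ :=
  ∑' t : ℕ, γ ^ t * r (traj f u x t) (u (traj f u x t))

/-- Discounted risk `ρ(x,u)`. -/
def risk {X U : Type*} (γ : ℝ) (f : X → U → X) (XF : Set X) (x : X) (u : X → U) : ℝ :=
  ∑' t : ℕ, γ ^ t * XF.indicator (fun _ => (1 : ℝ)) (traj f u x t)

/-- Penalized value function `V_p(x)`. -/
def Vpen {X U : Type*} (γ : ℝ) (f : X → U → X) (XF : Set X) (r : X → U → ℝ) (p : ℝ)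
    (x : X) : ℝ :=
  ⨆ u : X → U, (ret γ f r x u - p * risk γ f XF x u)

/-- Constrained value function `V(x)`: supremum of the return over safe controllers. -/
def Vcon {X U : Type*} (γ : ℝ) (f : X → U → X) (XF : Set X) (r : X → U → ℝ) (x : X) : ℝ :=
  ⨆ u : {u : X → U // SafeFor f XF u x}, ret γ f r x (u : X → U)

/-!
On a safe trajectory the risk vanishes, so for safe controllers the penalized objective
`G - p·ρ` is just the return `G`. A maximizer of the penalized objective exists and is safe,
so the supremum over all controllers is attained inside the safe ones, where it is the
supremum defining `V`. Boundedness of `r` (and of the indicator of `X_F`) makes both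
suprema finite, so `⨆` on `ℝ` is a genuine least upper bound.
-/

theorem ciSup_eq_ciSup_subtype_of_eq_ciSup {ι α : Type*} [ConditionallyCompleteLattice α]
    {F : ι → α} {P : ι → Prop} (hbdd : BddAbove (range F)) {i₀ : ι} (hi₀ : P i₀)
    (hmax : F i₀ = ⨆ i, F i) :
    ⨆ i, F i = ⨆ i : {i // P i}, F i := by
  have : Nonempty {i // P i} := ⟨⟨i₀, hi₀⟩⟩
  refine le_antisymm ?_ (ciSup_le fun i => le_ciSup hbdd i)
  rw [← hmax]
  exact le_ciSup (hbdd.mono (range_comp_subset_range Subtype.val F)) ⟨i₀, hi₀⟩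

section Discounted

variable {X U : Type*} {γ : ℝ} (f : X → U → X) (XF : Set X) (x : X) (u : X → U)

theorem abs_ret_le {r : X → U → ℝ} {C : ℝ} (hγ0 : 0 ≤ γ) (hγ1 : γ < 1)
    (hC : ∀ x a, |r x a| ≤ C) :
    |ret γ f r x u| ≤ C * (1 - γ)⁻¹ := by
  rw [← Real.norm_eq_abs, ret]
  refine tsum_of_norm_bounded ((hasSum_geometric_of_lt_one hγ0 hγ1).mul_left C) fun t => ?_
  rw [Real.norm_eq_abs, abs_mul, abs_pow, abs_of_nonneg hγ0, mul_comm]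
  exact mul_le_mul_of_nonneg_right (hC _ _) (pow_nonneg hγ0 t)

theorem risk_eq_ret :
    risk γ f XF x u = ret γ f (fun y _ => XF.indicator (fun _ => (1 : ℝ)) y) x u := rfl

theorem abs_risk_le (hγ0 : 0 ≤ γ) (hγ1 : γ < 1) : |risk γ f XF x u| ≤ (1 - γ)⁻¹ := by
  have hχ : ∀ (y : X) (_ : U), |XF.indicator (fun _ => (1 : ℝ)) y| ≤ 1 := fun y _ => by
    by_cases hy : y ∈ XF <;> simp [hy]
  simpa only [risk_eq_ret, one_mul] using abs_ret_le f x u hγ0 hγ1 hχ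

variable {f XF x u}

theorem risk_eq_zero_of_safeFor (hu : SafeFor f XF u x) : risk γ f XF x u = 0 := by
  simp only [risk, indicator_of_notMem (hu _), mul_zero, tsum_zero]

theorem bddAbove_range_penalized {r : X → U → ℝ} {C : ℝ} (hγ0 : 0 ≤ γ) (hγ1 : γ < 1)
    (hC : ∀ x a, |r x a| ≤ C) (p : ℝ) :
    BddAbove (range fun u : X → U => ret γ f r x u - p * risk γ f XF x u) := by
  refine ⟨C * (1 - γ)⁻¹ + |p| * (1 - γ)⁻¹, ?_⟩
  rintro _ ⟨u, rfl⟩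
  have hret := (le_abs_self _).trans (abs_ret_le f x u hγ0 hγ1 hC)
  have hrisk : -(p * risk γ f XF x u) ≤ |p| * (1 - γ)⁻¹ :=
    (neg_le_abs _).trans <| (abs_mul p _).trans_le <|
      mul_le_mul_of_nonneg_left (abs_risk_le f XF x u hγ0 hγ1) (abs_nonneg p)
  linarith

end Discounted

theorem penalized_eq_constrained_of_maximizers_safe_general {X U : Type*}
    (f : X → U → X) (XF : Set X) (γ : ℝ) (hγ0 : 0 < γ) (hγ1 : γ < 1)
    (r : X → U → ℝ) (hr : ∃ C : ℝ, ∀ x a, |r x a| ≤ C)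
    (p : ℝ)
    (hattain : ∀ x ∈ viab f XF, ∃ u : X → U,
      ret γ f r x u - p * risk γ f XF x u = Vpen γ f XF r p x)
    (hsafe : ∀ x ∈ viab f XF, ∀ u : X → U,
      ret γ f r x u - p * risk γ f XF x u = Vpen γ f XF r p x → SafeFor f XF u x) :
    ∀ x ∈ viab f XF, Vpen γ f XF r p x = Vcon γ f XF r x := by
  intro x hx
  obtain ⟨C, hC⟩ := hr
  obtain ⟨u₀, hu₀⟩ := hattain x hx
  have hVcon : Vcon γ f XF r x =
      ⨆ u : {u : X → U // SafeFor f XF u x}, (ret γ f r x u - p * risk γ f XF x u) :=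
    iSup_congr fun u => by rw [risk_eq_zero_of_safeFor u.2, mul_zero, sub_zero]
  rw [hVcon]
  exact ciSup_eq_ciSup_subtype_of_eq_ciSup (bddAbove_range_penalized hγ0.le hγ1 hC p)
    (hsafe x hx u₀ hu₀) hu₀

/-- Proposition 1: if, for every viable state, the penalized supremum is
attained and every maximizer is safe, then `V_p` coincides with `V` on the viability kernel. -/
theorem penalized_eq_constrained_of_maximizers_safe {X U : Type*} [Nonempty U]
    (f : X → U → X) (XF : Set X) (γ : ℝ) (hγ0 : 0 < γ) (hγ1 : γ < 1)
    (r : X → U → ℝ) (hr : ∃ C : ℝ, ∀ x a, |r x a| ≤ C)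
    (p : ℝ) (hp : 0 ≤ p)
    (hattain : ∀ x ∈ viab f XF, ∃ u : X → U,
      ret γ f r x u - p * risk γ f XF x u = Vpen γ f XF r p x)
    (hsafe : ∀ x ∈ viab f XF, ∀ u : X → U,
      ret γ f r x u - p * risk γ f XF x u = Vpen γ f XF r p x → SafeFor f XF u x) :
    ∀ x ∈ viab f XF, Vpen γ f XF r p x = Vcon γ f XF r x :=
  penalized_eq_constrained_of_maximizers_safe_general f XF γ hγ0 hγ1 r hr p hattain hsafe
end
end

section
/- (Risk lower bound on the unviability kernel.) Under the bounded time-to-failure assumption with bound T_f, for every x ∈ X_U and every controller u, ρ(x,u) ≥ γ^{T_f}. -/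
open Set

noncomputable section

section Risk

variable {X U : Type*} {f : X → U → X} {XF : Set X} {γ : ℝ}

lemma risk_term_nonneg (hγ0 : 0 ≤ γ) (x : X) (u : X → U) (t : ℕ) :
    0 ≤ γ ^ t * XF.indicator (fun _ => (1 : ℝ)) (traj f u x t) :=
  mul_nonneg (pow_nonneg hγ0 t) (indicator_nonneg (fun _ _ => zero_le_one) _)

lemma summable_risk_terms (hγ0 : 0 ≤ γ) (hγ1 : γ < 1) (x : X) (u : X → U) :
    Summable fun t => γ ^ t * XF.indicator (fun _ => (1 : ℝ)) (traj f u x t) :=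
  (summable_geometric_of_lt_one hγ0 hγ1).of_nonneg_of_le (risk_term_nonneg hγ0 x u)
    fun t => mul_le_of_le_one_right (pow_nonneg hγ0 t)
      (indicator_le_self' (fun _ _ => zero_le_one) _)

lemma pow_le_risk_of_traj_mem (hγ0 : 0 ≤ γ) (hγ1 : γ < 1) {x : X} {u : X → U} {t : ℕ}
    (ht : traj f u x t ∈ XF) : γ ^ t ≤ risk γ f XF x u := by
  have hterm := (summable_risk_terms (f := f) (XF := XF) hγ0 hγ1 x u).le_tsum t
    fun n _ => risk_term_nonneg hγ0 x u n
  rwa [indicator_of_mem ht, mul_one] at hterm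

end Risk

theorem risk_lower_bound_on_unviable_general {X U : Type*}
    (f : X → U → X) (XF : Set X) (γ : ℝ) (hγ0 : 0 < γ) (hγ1 : γ < 1)
    (Tf : ℕ) (hTf : ∀ x, x ∉ viab f XF → ∀ u : X → U, ∃ t ≤ Tf, traj f u x t ∈ XF)
    (x : X) (hx : x ∉ viab f XF) (u : X → U) :
    γ ^ Tf ≤ risk γ f XF x u := by
  obtain ⟨t, htTf, hfail⟩ := hTf x hx u
  calc γ ^ Tf ≤ γ ^ t := pow_le_pow_of_le_one hγ0.le hγ1.le htTf
    _ ≤ risk γ f XF x u := pow_le_risk_of_traj_mem hγ0.le hγ1 hfail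

/-- under the bounded time-to-failure assumption with bound `Tf`, the risk of
any controller from any unviable state is at least `γ ^ Tf`. -/
theorem risk_lower_bound_on_unviable {X U : Type*} [Nonempty U]
    (f : X → U → X) (XF : Set X) (γ : ℝ) (hγ0 : 0 < γ) (hγ1 : γ < 1)
    (Tf : ℕ) (hTf : ∀ x, x ∉ viab f XF → ∀ u : X → U, ∃ t ≤ Tf, traj f u x t ∈ XF)
    (x : X) (hx : x ∉ viab f XF) (u : X → U) :
    γ ^ Tf ≤ risk γ f XF x u :=
  risk_lower_bound_on_unviable_general f XF γ hγ0 hγ1 Tf hTf x hx u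
end
end

section
/- (Return upper bound on the unviability kernel.) Assume X_F is absorbing (f(x,a) ∈ X_F whenever x ∈ X_F) and nonempty, and r(x,a) = 0 whenever x ∈ X_F. Under the bounded time-to-failure assumption with bound T_f, for every x ∈ X_U and every controller u, G(x,u) ≤ R_{X_U} · (1 − γ^{T_f+1}) / (1 − γ), where R_{X_U} = sSup {r(x,a) | x ∈ X_U, a ∈ U}. -/
open Set

noncomputable section

/-- `R_{Q_V}`: infimum of the reward over state-control pairs transitioning into the kernel. -/
def RQV {X U : Type*} (f : X → U → X) (XF : Set X) (r : X → U → ℝ) : ℝ :=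
  sInf {y : ℝ | ∃ q : X × U, f q.1 q.2 ∈ viab f XF ∧ y = r q.1 q.2}

/-- `R_{Q_U}`: supremum of the reward over state-control pairs transitioning out of the kernel. -/
def RQU {X U : Type*} (f : X → U → X) (XF : Set X) (r : X → U → ℝ) : ℝ :=
  sSup {y : ℝ | ∃ q : X × U, f q.1 q.2 ∉ viab f XF ∧ y = r q.1 q.2}

/-- `R_{X_U}`: supremum of the reward over the unviability kernel. -/
def RXU {X U : Type*} (f : X → U → X) (XF : Set X) (r : X → U → ℝ) : ℝ :=
  sSup {y : ℝ | ∃ x, x ∉ viab f XF ∧ ∃ a : U, y = r x a}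

/-- `inf_{X_V} V`: infimum of the constrained value function over the viability kernel. -/
def infV {X U : Type*} (γ : ℝ) (f : X → U → X) (XF : Set X) (r : X → U → ℝ) : ℝ :=
  sInf {y : ℝ | ∃ x ∈ viab f XF, y = Vcon γ f XF r x}

/-- `sup_{X_U} V_p`: supremum of the penalized value function over the unviability kernel. -/
def supVp {X U : Type*} (γ : ℝ) (f : X → U → X) (XF : Set X) (r : X → U → ℝ) (p : ℝ) : ℝ :=
  sSup {y : ℝ | ∃ x, x ∉ viab f XF ∧ y = Vpen γ f XF r p x}

/-!
Up to its first failure time `t₀ ≤ T_f` the trajectory stays in `X_U`, because a state with a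
viable successor is itself viable; so each of its first `t₀` rewards is at most `R_{X_U}`. From
`t₀` on it stays in the absorbing set `X_F`, where rewards vanish. Hence
`G(x,u) ≤ R_{X_U} ∑_{t ≤ T_f} γ^t`, where dropping terms is allowed since `R_{X_U} ≥ 0`: the
failure state reached at `t₀` lies in `X_U` and earns reward `0`.
-/

theorem Nat.exists_first_of_exists_le {p : ℕ → Prop} {T : ℕ} (h : ∃ t ≤ T, p t) :
    ∃ t₀ ≤ T, p t₀ ∧ ∀ s < t₀, ¬p s := by
  classical
  obtain ⟨t, htT, ht⟩ := h
  have hp : ∃ t, p t := ⟨t, ht⟩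
  exact ⟨Nat.find hp, (Nat.find_min' hp ht).trans htT, Nat.find_spec hp,
    fun _ => Nat.find_min hp⟩

section Trajectory

variable {X U : Type*} (f : X → U → X)

theorem traj_add (u : X → U) (x : X) (s t : ℕ) :
    traj f u x (s + t) = traj f u (traj f u x s) t := by
  induction t with
  | zero => rfl
  | succ t ih => rw [← add_assoc, traj, traj, ih]

theorem traj_mem_of_forall_mem {S : Set X} {u : X → U} (hS : ∀ z ∈ S, f z (u z) ∈ S) {x : X}
    (hx : x ∈ S) (t : ℕ) : traj f u x t ∈ S := by
  induction t with
  | zero => exact hx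
  | succ t ih => exact hS _ ih

theorem traj_mem_of_absorbing {XF : Set X} (habs : ∀ x ∈ XF, ∀ a : U, f x a ∈ XF)
    {u : X → U} {x : X} {T : ℕ} (hT : traj f u x T ∈ XF) {t : ℕ} (ht : T ≤ t) :
    traj f u x t ∈ XF := by
  obtain ⟨k, rfl⟩ := Nat.exists_eq_add_of_le ht
  rw [traj_add]
  exact traj_mem_of_forall_mem f (fun z hz => habs z hz _) hT k

theorem safeFor_of_forall_mem {XF S : Set X} {u : X → U} (hS : ∀ z ∈ S, f z (u z) ∈ S)
    (hSF : Disjoint S XF) {x : X} (hx : x ∈ S) : SafeFor f XF u x :=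
  fun t => hSF.notMem_of_mem_left (traj_mem_of_forall_mem f hS hx t)

end Trajectory

section Viability

variable {X U : Type*} (f : X → U → X) {XF : Set X}

theorem notMem_viab_of_mem {x : X} (hx : x ∈ XF) : x ∉ viab f XF :=
  fun ⟨_, hu⟩ => hu 0 hx

theorem mem_viab_of_apply_mem_viab {x : X} (hx : x ∉ XF) {a : U} (ha : f x a ∈ viab f XF) :
    x ∈ viab f XF := by
  classical
  obtain ⟨v, hv⟩ := ha
  -- If the `v`-trajectory of `f x a` returns to `x`, the new controller just repeats the loop.
  refine ⟨Function.update v x a,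
    safeFor_of_forall_mem f (S := insert x (range (traj f v (f x a)))) ?_ ?_ (mem_insert x _)⟩
  · intro z hz
    by_cases hzx : z = x
    · subst hzx
      rw [Function.update_self]
      exact mem_insert_of_mem _ ⟨0, rfl⟩
    · obtain ⟨n, rfl⟩ := hz.resolve_left hzx
      rw [Function.update_of_ne hzx]
      exact mem_insert_of_mem _ ⟨n + 1, rfl⟩
  · rw [Set.disjoint_left]
    rintro z (rfl | ⟨n, rfl⟩)
    exacts [hx, hv n]

theorem traj_notMem_viab {u : X → U} {x : X} (hx : x ∉ viab f XF) {t : ℕ}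
    (h : ∀ s < t, traj f u x s ∉ XF) : traj f u x t ∉ viab f XF := by
  induction t with
  | zero => exact hx
  | succ t ih =>
    exact fun ht => ih (fun s hs => h s (by omega))
      (mem_viab_of_apply_mem_viab f (h t t.lt_succ_self) ht)

theorem le_RXU {r : X → U → ℝ} {C : ℝ} (hC : ∀ x a, r x a ≤ C) {x : X} (hx : x ∉ viab f XF)
    (a : U) : r x a ≤ RXU f XF r :=
  le_csSup ⟨C, by rintro _ ⟨z, -, b, rfl⟩; exact hC z b⟩ ⟨x, hx, a, rfl⟩

end Viability

theorem ret_eq_sum_range {X U : Type*} (f : X → U → X) {XF : Set X} {r : X → U → ℝ}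
    (hr0 : ∀ x ∈ XF, ∀ a : U, r x a = 0) (γ : ℝ) {u : X → U} {x : X} {T : ℕ}
    (hT : ∀ t, T ≤ t → traj f u x t ∈ XF) :
    ret γ f r x u = ∑ t ∈ Finset.range T, γ ^ t * r (traj f u x t) (u (traj f u x t)) :=
  tsum_eq_sum fun t ht => by
    rw [hr0 _ (hT t (by simpa using ht)), mul_zero]

theorem return_upper_bound_on_unviable_general {X U : Type*}
    (f : X → U → X) (XF : Set X) (γ : ℝ) (hγ0 : 0 < γ) (hγ1 : γ < 1)
    (r : X → U → ℝ) (hr : ∃ C : ℝ, ∀ x a, |r x a| ≤ C)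
    (habs : ∀ x ∈ XF, ∀ a : U, f x a ∈ XF)
    (hr0 : ∀ x ∈ XF, ∀ a : U, r x a = 0)
    (Tf : ℕ) (hTf : ∀ x, x ∉ viab f XF → ∀ u : X → U, ∃ t ≤ Tf, traj f u x t ∈ XF)
    (x : X) (hx : x ∉ viab f XF) (u : X → U) :
    ret γ f r x u ≤ RXU f XF r * (1 - γ ^ (Tf + 1)) / (1 - γ) := by
  obtain ⟨C, hC⟩ := hr
  have hrC : ∀ x a, r x a ≤ C := fun x a => (le_abs_self _).trans (hC x a)
  obtain ⟨t₀, ht₀, hfail, hsafe⟩ := Nat.exists_first_of_exists_le (hTf x hx u)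
  have hR : 0 ≤ RXU f XF r := by
    have h := le_RXU f hrC (notMem_viab_of_mem f hfail) (u (traj f u x t₀))
    rwa [hr0 _ hfail] at h
  have hterm : ∀ t ∈ Finset.range t₀,
      γ ^ t * r (traj f u x t) (u (traj f u x t)) ≤ γ ^ t * RXU f XF r := fun t ht =>
    mul_le_mul_of_nonneg_left (le_RXU f hrC (traj_notMem_viab f hx fun s hs =>
      hsafe s (hs.trans (Finset.mem_range.1 ht))) _) (pow_nonneg hγ0.le t)
  calc ret γ f r x u
      = ∑ t ∈ Finset.range t₀, γ ^ t * r (traj f u x t) (u (traj f u x t)) :=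
        ret_eq_sum_range f hr0 γ fun t => traj_mem_of_absorbing f habs hfail
    _ ≤ ∑ t ∈ Finset.range t₀, γ ^ t * RXU f XF r := Finset.sum_le_sum hterm
    _ ≤ ∑ t ∈ Finset.range (Tf + 1), γ ^ t * RXU f XF r :=
        Finset.sum_le_sum_of_subset_of_nonneg (Finset.range_subset_range.2 (by omega))
          fun t _ _ => mul_nonneg (pow_nonneg hγ0.le t) hR
    _ = RXU f XF r * (1 - γ ^ (Tf + 1)) / (1 - γ) := by
        rw [← Finset.sum_mul, geom_sum_eq hγ1.ne, ← neg_div_neg_eq, neg_sub, neg_sub]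
        ring

/-- return upper bound on the unviability kernel. -/
theorem return_upper_bound_on_unviable {X U : Type*} [Nonempty U]
    (f : X → U → X) (XF : Set X) (γ : ℝ) (hγ0 : 0 < γ) (hγ1 : γ < 1)
    (r : X → U → ℝ) (hr : ∃ C : ℝ, ∀ x a, |r x a| ≤ C)
    (habs : ∀ x ∈ XF, ∀ a : U, f x a ∈ XF) (hFne : XF.Nonempty)
    (hr0 : ∀ x ∈ XF, ∀ a : U, r x a = 0)
    (Tf : ℕ) (hTf : ∀ x, x ∉ viab f XF → ∀ u : X → U, ∃ t ≤ Tf, traj f u x t ∈ XF)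
    (x : X) (hx : x ∉ viab f XF) (u : X → U) :
    ret γ f r x u ≤ RXU f XF r * (1 - γ ^ (Tf + 1)) / (1 - γ) :=
  return_upper_bound_on_unviable_general f XF γ hγ0 hγ1 r hr habs hr0 Tf hTf x hx u
end
end
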